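/- arXiv:1309.1770 — 2 statements merged into one kernel-verified Lean document; each statement's English description precedes it below -/
import Mathlib

section
/- Let w : ℝⁿ → ℝ be λ-quasi-convex on an open convex set U (i.e. x ↦ w(x) + (λ/2)|x|² is convex on U). If x₀ ∈ U is an upper contact point for w (i.e. w admits some upper contact jet (p, A) at x₀), then w is differentiable at x₀, and for every upper contact jet (p, A) of w at x₀ one has p = Dw(x₀). -/
open scoped RealInnerProductSpace Topology
open Filter MeasureTheory

/-- The quadratic form `⟨A v, v⟩` associated to a matrix `A`. -/
noncomputable def quad {n : ℕ} (A : Matrix (Fin n) (Fin n) ℝ)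
    (v : EuclideanSpace ℝ (Fin n)) : ℝ :=
  ∑ i, ∑ j, A i j * v i * v j

/-- `(p, A)` is an upper contact jet for `w` at `x₀`. -/
def UpperContactJet {n : ℕ} (w : EuclideanSpace ℝ (Fin n) → ℝ)
    (x₀ p : EuclideanSpace ℝ (Fin n)) (A : Matrix (Fin n) (Fin n) ℝ) : Prop :=
  ∀ᶠ y in 𝓝 x₀, w y ≤ w x₀ + ⟪p, y - x₀⟫ + (1 / 2) * quad A (y - x₀)

/-- `w` is twice differentiable at `x` with gradient `g` and Hessian `H`, in the sense of
a second-order Taylor expansion. -/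
def TwiceDiffAt {n : ℕ} (w : EuclideanSpace ℝ (Fin n) → ℝ)
    (x g : EuclideanSpace ℝ (Fin n)) (H : Matrix (Fin n) (Fin n) ℝ) : Prop :=
  HasGradientAt w g x ∧
    (fun y => w y - w x - ⟪g, y - x⟫ - (1 / 2) * quad H (y - x)) =o[𝓝 x]
      fun y => ‖y - x‖ ^ 2

/-- `w` is `lam`-quasi-convex on `U`: `w + (lam/2)|·|²` is convex on `U`. -/
def QCOn {n : ℕ} (lam : ℝ) (U : Set (EuclideanSpace ℝ (Fin n)))
    (w : EuclideanSpace ℝ (Fin n) → ℝ) : Prop :=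
  ConvexOn ℝ U (fun x => w x + (lam / 2) * ‖x‖ ^ 2)

lemma coord_le_norm {n : ℕ} (v : EuclideanSpace ℝ (Fin n)) (i : Fin n) : |v i| ≤ ‖v‖ := by
  rw [EuclideanSpace.norm_eq]
  calc |v i| = Real.sqrt (‖v i‖ ^ 2) := by rw [Real.sqrt_sq_eq_abs]; simp [abs_abs]
  _ ≤ Real.sqrt (∑ j, ‖v j‖ ^ 2) := by
      apply Real.sqrt_le_sqrt
      exact Finset.single_le_sum (f := fun j => ‖v j‖^2) (fun j _ => by positivity)
        (Finset.mem_univ i)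

lemma quad_abs_le {n : ℕ} (A : Matrix (Fin n) (Fin n) ℝ) (v : EuclideanSpace ℝ (Fin n)) :
    |quad A v| ≤ (∑ i, ∑ j, |A i j|) * ‖v‖ ^ 2 := by
  rw [quad, Finset.sum_mul]
  refine (Finset.abs_sum_le_sum_abs _ _).trans (Finset.sum_le_sum fun i _ => ?_)
  rw [Finset.sum_mul]
  refine (Finset.abs_sum_le_sum_abs _ _).trans (Finset.sum_le_sum fun j _ => ?_)
  have h1 := coord_le_norm v i
  have h2 := coord_le_norm v j
  have h3 := abs_nonneg (v i)
  have h4 := abs_nonneg (v j)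
  have h5 := abs_nonneg (A i j)
  calc |A i j * v i * v j| = |A i j| * (|v i| * |v j|) := by rw [abs_mul, abs_mul, mul_assoc]
  _ ≤ |A i j| * (‖v‖ * ‖v‖) := by
      apply mul_le_mul_of_nonneg_left _ h5
      exact mul_le_mul h1 h2 h4 (norm_nonneg v)
  _ = |A i j| * ‖v‖ ^ 2 := by ring

lemma quad_neg {n : ℕ} (A : Matrix (Fin n) (Fin n) ℝ) (v : EuclideanSpace ℝ (Fin n)) :
    quad A (-v) = quad A v := by
  unfold quad
  refine Finset.sum_congr rfl fun i _ => Finset.sum_congr rfl fun j _ => ?_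
  have hi : (-v) i = -(v i) := rfl
  have hj : (-v) j = -(v j) := rfl
  rw [hi, hj]; ring

/-- Key lemma: on an open set where `w` is quasi-convex, any upper contact jet first-order
part is a gradient. -/
lemma jet_hasGradientAt {n : ℕ} {U : Set (EuclideanSpace ℝ (Fin n))}
    (hU : IsOpen U) {w : EuclideanSpace ℝ (Fin n) → ℝ} {lam : ℝ} (hlam : 0 ≤ lam)
    (hqc : QCOn lam U w) {x₀ : EuclideanSpace ℝ (Fin n)} (hx₀ : x₀ ∈ U)
    {q : EuclideanSpace ℝ (Fin n)} {B : Matrix (Fin n) (Fin n) ℝ}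
    (hjet : UpperContactJet w x₀ q B) : HasGradientAt w q x₀ := by
  set C : ℝ := ∑ i, ∑ j, |B i j| with hCdef
  have hC0 : 0 ≤ C := Finset.sum_nonneg fun i _ =>
    Finset.sum_nonneg fun j _ => abs_nonneg _
  set K : ℝ := lam + C / 2 with hKdef
  have hKey : ∀ᶠ y in 𝓝 x₀, |w y - w x₀ - ⟪q, y - x₀⟫| ≤ K * ‖y - x₀‖ ^ 2 := by
    obtain ⟨ε, hε, hball⟩ := Metric.eventually_nhds_iff_ball.mp
      (hjet.and (hU.eventually_mem hx₀))
    rw [Metric.eventually_nhds_iff_ball]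
    refine ⟨ε, hε, fun y hy => ?_⟩
    set h : EuclideanSpace ℝ (Fin n) := y - x₀ with hh
    set y' : EuclideanSpace ℝ (Fin n) := x₀ - h with hy'
    have hy'ball : y' ∈ Metric.ball x₀ ε := by
      rw [Metric.mem_ball, dist_eq_norm] at hy ⊢
      have : y' - x₀ = -(y - x₀) := by rw [hy', hh]; abel
      rw [this, norm_neg]; exact hy
    obtain ⟨hjy, hyU⟩ := hball y hy
    obtain ⟨hjy', hy'U⟩ := hball y' hy'ball
    -- quadratic form bounds
    have hqd := quad_abs_le B h
    have hqd' : quad B (y' - x₀) = quad B h := by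
      have : y' - x₀ = -h := by rw [hy']; abel
      rw [this, quad_neg]
    have hinner' : ⟪q, y' - x₀⟫ = -⟪q, h⟫ := by
      have : y' - x₀ = -h := by rw [hy']; abel
      rw [this, inner_neg_right]
    -- convexity midpoint inequality
    have hmid : w x₀ + (lam / 2) * ‖x₀‖ ^ 2 ≤
        (1/2 : ℝ) * (w y + (lam / 2) * ‖y‖ ^ 2) + (1/2 : ℝ) * (w y' + (lam / 2) * ‖y'‖ ^ 2) := by
      have hcomb := hqc.2 hyU hy'U (by norm_num : (0:ℝ) ≤ 1/2) (by norm_num : (0:ℝ) ≤ 1/2)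
        (by norm_num : (1/2 : ℝ) + 1/2 = 1)
      have heq : (1/2 : ℝ) • y + (1/2 : ℝ) • y' = x₀ := by
        rw [hy', hh]; module
      rw [heq] at hcomb
      simpa using hcomb
    -- norm identities
    have hny : ‖y‖ ^ 2 = ‖x₀‖ ^ 2 + 2 * ⟪x₀, h⟫ + ‖h‖ ^ 2 := by
      have : y = x₀ + h := by rw [hh]; abel
      rw [this, norm_add_sq_real]
    have hny' : ‖y'‖ ^ 2 = ‖x₀‖ ^ 2 - 2 * ⟪x₀, h⟫ + ‖h‖ ^ 2 := by
      rw [hy', norm_sub_sq_real]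
    rw [hny, hny'] at hmid
    have hmid2 : w x₀ ≤ 1/2 * w y + 1/2 * w y' + lam / 2 * ‖h‖ ^ 2 := by linarith
    rw [← hh] at hjy
    rw [hqd', hinner'] at hjy'
    have habs := (abs_le.mp hqd).2
    have hn2 : 0 ≤ ‖h‖ ^ 2 := by positivity
    have hln2 : 0 ≤ lam * ‖h‖ ^ 2 := mul_nonneg hlam hn2
    -- lower bound
    have hlow : w x₀ + ⟪q, h⟫ - K * ‖h‖ ^ 2 ≤ w y := by
      rw [hKdef, ← hCdef] at *
      linarith
    -- upper bound
    have hupp : w y ≤ w x₀ + ⟪q, h⟫ + K * ‖h‖ ^ 2 := by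
      rw [hKdef, ← hCdef] at *
      linarith
    rw [abs_le]
    constructor <;> [linarith [hlow]; linarith [hupp]]
  -- conclude differentiability
  rw [hasGradientAt_iff_isLittleO]
  have hBigO : (fun y => w y - w x₀ - ⟪q, y - x₀⟫) =O[𝓝 x₀] fun y => ‖y - x₀‖ ^ 2 := by
    rw [Asymptotics.isBigO_iff]
    refine ⟨K, hKey.mono fun y hy => ?_⟩
    rw [Real.norm_eq_abs, Real.norm_eq_abs, abs_of_nonneg (by positivity : (0:ℝ) ≤ ‖y - x₀‖ ^ 2)]
    exact hy
  exact hBigO.trans_isLittleO (Asymptotics.isLittleO_pow_sub_sub x₀ one_lt_two)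

/-- (D at UCP) If `w` is `lam`-quasi-convex on the open convex set `U` and `x₀ ∈ U` is an
upper contact point for `w`, then `w` is differentiable at `x₀` and every upper contact jet
of `w` at `x₀` has first-order part equal to the gradient `Dw(x₀)`. -/
theorem stmt_4 {n : ℕ} (U : Set (EuclideanSpace ℝ (Fin n)))
    (hU : IsOpen U) (hUc : Convex ℝ U)
    (w : EuclideanSpace ℝ (Fin n) → ℝ) (lam : ℝ) (hlam : 0 ≤ lam)
    (hqc : QCOn lam U w)
    (x₀ : EuclideanSpace ℝ (Fin n)) (hx₀ : x₀ ∈ U)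
    (p : EuclideanSpace ℝ (Fin n)) (A : Matrix (Fin n) (Fin n) ℝ)
    (hA : A.IsSymm) (hjet : UpperContactJet w x₀ p A) :
    ∃ g : EuclideanSpace ℝ (Fin n), HasGradientAt w g x₀ ∧
      ∀ (p' : EuclideanSpace ℝ (Fin n)) (A' : Matrix (Fin n) (Fin n) ℝ),
        A'.IsSymm → UpperContactJet w x₀ p' A' → p' = g := by
  refine ⟨p, jet_hasGradientAt hU hlam hqc hx₀ hjet, fun p' A' _ hjet' => ?_⟩
  exact (jet_hasGradientAt hU hlam hqc hx₀ hjet').unique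
    (jet_hasGradientAt hU hlam hqc hx₀ hjet)
end

section
/- Let u, v : ℝⁿ → ℝ be λ-quasi-convex on an open convex set U and suppose w = u + v has an upper contact jet at x₀ ∈ U. Then both u and v are differentiable at x₀, and every upper contact jet of w at x₀ has first-order part p₀ = Du(x₀) + Dv(x₀). -/
open scoped RealInnerProductSpace Topology
open Filter MeasureTheory

lemma quad_bound {n : ℕ} (A : Matrix (Fin n) (Fin n) ℝ) :
    ∃ C : ℝ, 0 ≤ C ∧ ∀ v : EuclideanSpace ℝ (Fin n), quad A v ≤ C * ‖v‖ ^ 2 := by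
  refine ⟨∑ i, ∑ j, |A i j|, by positivity, fun v => ?_⟩
  rw [quad, Finset.sum_mul]
  refine Finset.sum_le_sum fun i _ => ?_
  rw [Finset.sum_mul]
  refine Finset.sum_le_sum fun j _ => ?_
  have hi := coord_le_norm v i
  have hj := coord_le_norm v j
  have hvi := abs_nonneg (v i)
  have hvj := abs_nonneg (v j)
  have hA := abs_nonneg (A i j)
  calc A i j * v i * v j ≤ |A i j * v i * v j| := le_abs_self _
    _ = |A i j| * |v i| * |v j| := by rw [abs_mul, abs_mul]
    _ = |A i j| * (|v i| * |v j|) := by ring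
    _ ≤ |A i j| * (‖v‖ * ‖v‖) :=
        mul_le_mul_of_nonneg_left (mul_le_mul hi hj hvj (norm_nonneg v)) hA
    _ = |A i j| * ‖v‖ ^ 2 := by ring

lemma exists_subgradient {n : ℕ} {U : Set (EuclideanSpace ℝ (Fin n))} (hU : IsOpen U)
    {φ : EuclideanSpace ℝ (Fin n) → ℝ} (hφ : ConvexOn ℝ U φ)
    {x₀ : EuclideanSpace ℝ (Fin n)} (hx₀ : x₀ ∈ U) :
    ∃ q : EuclideanSpace ℝ (Fin n), ∀ᶠ y in 𝓝 x₀, φ x₀ + ⟪q, y - x₀⟫ ≤ φ y := by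
  obtain ⟨ε, hε, hball⟩ := Metric.isOpen_iff.mp hU x₀ hx₀
  set B := Metric.ball x₀ ε with hB
  have hBopen : IsOpen B := Metric.isOpen_ball
  have hBconv : Convex ℝ B := convex_ball x₀ ε
  have hφB : ConvexOn ℝ B φ := hφ.subset hball hBconv
  have hcont : ContinuousOn φ B := hφB.continuousOn hBopen
  -- the strict epigraph over B
  set S : Set (EuclideanSpace ℝ (Fin n) × ℝ) := {p | p.1 ∈ B ∧ φ p.1 < p.2} with hS
  have hSopen : IsOpen S := by
    have h1 : ContinuousOn (fun p : EuclideanSpace ℝ (Fin n) × ℝ => p.2 - φ p.1)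
        (B ×ˢ (Set.univ : Set ℝ)) := by
      apply ContinuousOn.sub continuous_snd.continuousOn
      exact hcont.comp continuous_fst.continuousOn (fun p hp => hp.1)
    have h2 := h1.isOpen_inter_preimage (hBopen.prod isOpen_univ) (isOpen_Ioi (a := (0:ℝ)))
    convert h2 using 1
    ext p
    simp only [hS, Set.mem_setOf_eq, Set.mem_inter_iff, Set.mem_prod, Set.mem_univ, and_true,
      Set.mem_preimage, Set.mem_Ioi, sub_pos]
  have hSconv : Convex ℝ S := by
    intro p hp p' hp' a b ha hb hab
    rcases eq_or_lt_of_le ha with h | h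
    · have hb1 : b = 1 := by linarith
      rw [← h, hb1]
      simpa using hp'
    · constructor
      · exact hBconv hp.1 hp'.1 ha hb hab
      · have h1 : φ (a • p.1 + b • p'.1) ≤ a * φ p.1 + b * φ p'.1 :=
          hφB.2 hp.1 hp'.1 ha hb hab
        have h2 : a * φ p.1 < a * p.2 := (mul_lt_mul_iff_right₀ h).mpr hp.2
        have h3 : b * φ p'.1 ≤ b * p'.2 := mul_le_mul_of_nonneg_left hp'.2.le hb
        have h5 : (a • p + b • p').1 = a • p.1 + b • p'.1 := rfl
        have h4 : (a • p + b • p').2 = a * p.2 + b * p'.2 := rfl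
        show φ (a • p + b • p').1 < (a • p + b • p').2
        rw [h5, h4]
        linarith
  have hnot : (x₀, φ x₀) ∉ S := fun h => lt_irrefl _ h.2
  obtain ⟨f, hf⟩ := geometric_hahn_banach_point_open hSconv hSopen hnot
  set c : ℝ := f (0, 1) with hc
  set g : EuclideanSpace ℝ (Fin n) → ℝ := fun x => f (x, 0) with hg
  have key : ∀ (x : EuclideanSpace ℝ (Fin n)) (t : ℝ), f (x, t) = g x + t * c := by
    intro x t
    have h5 : (x, t) = (x, (0:ℝ)) + t • ((0:EuclideanSpace ℝ (Fin n)), (1:ℝ)) := by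
      simp [Prod.ext_iff]
    rw [h5, map_add, f.map_smul]
    simp [hg, hc, smul_eq_mul]
  have hcpos : 0 < c := by
    have h1 := hf (x₀, φ x₀ + 1) ⟨Metric.mem_ball_self hε, lt_add_one _⟩
    rw [key, key] at h1
    linarith
  have hsub : ∀ y ∈ B, g x₀ + φ x₀ * c ≤ g y + φ y * c := by
    intro y hy
    by_contra hlt
    push_neg at hlt
    set d : ℝ := g x₀ + φ x₀ * c - (g y + φ y * c) with hd
    have hdpos : 0 < d := by simp only [hd]; linarith
    have ht : φ y < φ y + d / (2 * c) := by
      have : 0 < d / (2 * c) := div_pos hdpos (by linarith)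
      linarith
    have h1 := hf (y, φ y + d / (2 * c)) ⟨hy, ht⟩
    rw [key, key] at h1
    have h2 : (φ y + d / (2 * c)) * c = φ y * c + d / 2 := by
      field_simp
    rw [h2] at h1
    simp only [hd] at h1
    linarith
  set q : EuclideanSpace ℝ (Fin n) := (InnerProductSpace.toDual ℝ _).symm
    ((-(c⁻¹)) • (f.comp (ContinuousLinearMap.inl ℝ (EuclideanSpace ℝ (Fin n)) ℝ))) with hq'
  refine ⟨q, ?_⟩
  filter_upwards [hBopen.mem_nhds (Metric.mem_ball_self hε)] with y hy
  have hinner : ⟪q, y - x₀⟫ = -(c⁻¹) * (g y - g x₀) := by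
    rw [hq', InnerProductSpace.toDual_symm_apply]
    have h6 : ((y - x₀ : EuclideanSpace ℝ (Fin n)), (0:ℝ)) =
        (y, (0:ℝ)) - (x₀, (0:ℝ)) := by simp [Prod.ext_iff]
    simp only [ContinuousLinearMap.smul_apply, ContinuousLinearMap.comp_apply,
      ContinuousLinearMap.inl_apply, smul_eq_mul]
    rw [h6, map_sub]
  rw [hinner]
  have h := hsub y hy
  have h3 : c⁻¹ * (g x₀ - g y) ≤ c⁻¹ * ((φ y - φ x₀) * c) :=
    mul_le_mul_of_nonneg_left (by linarith) (inv_nonneg.mpr hcpos.le)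
  have h4 : c⁻¹ * ((φ y - φ x₀) * c) = φ y - φ x₀ := by field_simp
  have h5 : -c⁻¹ * (g y - g x₀) = c⁻¹ * (g x₀ - g y) := by ring
  linarith

lemma hasGradientAt_of_squeeze {n : ℕ} {f : EuclideanSpace ℝ (Fin n) → ℝ}
    {x₀ g : EuclideanSpace ℝ (Fin n)} {C : ℝ}
    (h : ∀ᶠ y in 𝓝 x₀, |f y - f x₀ - ⟪g, y - x₀⟫| ≤ C * ‖y - x₀‖ ^ 2) :
    HasGradientAt f g x₀ := by
  rw [hasGradientAt_iff_hasFDerivAt, hasFDerivAt_iff_isLittleO_nhds_zero]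
  rw [Asymptotics.isLittleO_iff]
  intro ε hε
  have hC : 0 < max C 1 := lt_max_of_lt_right one_pos
  have hδ : 0 < ε / max C 1 := div_pos hε hC
  have hmem : Metric.ball (0 : EuclideanSpace ℝ (Fin n)) (ε / max C 1) ∈
      𝓝 (0 : EuclideanSpace ℝ (Fin n)) := Metric.ball_mem_nhds _ hδ
  have h2 : ∀ᶠ z in 𝓝 (0 : EuclideanSpace ℝ (Fin n)),
      |f (x₀ + z) - f x₀ - ⟪g, (x₀ + z) - x₀⟫| ≤ C * ‖(x₀ + z) - x₀‖ ^ 2 := by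
    have hcont : Filter.Tendsto (fun z : EuclideanSpace ℝ (Fin n) => x₀ + z)
        (𝓝 0) (𝓝 x₀) := by
      have h0 : Continuous (fun z : EuclideanSpace ℝ (Fin n) => x₀ + z) :=
        continuous_const.add continuous_id
      simpa using h0.tendsto 0
    exact hcont.eventually h
  filter_upwards [h2, hmem] with z hz hzb
  rw [Metric.mem_ball, dist_zero_right] at hzb
  have he : (x₀ + z) - x₀ = z := by abel
  rw [he] at hz
  have hd : (InnerProductSpace.toDual ℝ (EuclideanSpace ℝ (Fin n)) g) z = ⟪g, z⟫ := rfl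
  rw [Real.norm_eq_abs, hd]
  calc |f (x₀ + z) - f x₀ - ⟪g, z⟫| ≤ C * ‖z‖ ^ 2 := hz
    _ ≤ max C 1 * ‖z‖ ^ 2 :=
        mul_le_mul_of_nonneg_right (le_max_left _ _) (sq_nonneg _)
    _ = (max C 1 * ‖z‖) * ‖z‖ := by ring
    _ ≤ ε * ‖z‖ := by
        apply mul_le_mul_of_nonneg_right _ (norm_nonneg z)
        calc max C 1 * ‖z‖ ≤ max C 1 * (ε / max C 1) :=
              mul_le_mul_of_nonneg_left hzb.le hC.le
          _ = ε := by field_simp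

lemma eq_zero_of_inner_le {n : ℕ} {d x₀ : EuclideanSpace ℝ (Fin n)} {C : ℝ}
    (h : ∀ᶠ y in 𝓝 x₀, ⟪d, y - x₀⟫ ≤ C * ‖y - x₀‖ ^ 2) : d = 0 := by
  by_contra hd
  have hdn : 0 < ‖d‖ := norm_pos_iff.mpr hd
  obtain ⟨δ, hδ, hδ'⟩ := Metric.eventually_nhds_iff.mp h
  set C' : ℝ := max C 1 with hC'
  have hC'pos : 0 < C' := lt_max_of_lt_right one_pos
  set t : ℝ := min (δ / (2 * ‖d‖)) (1 / (2 * C')) with ht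
  have htpos : 0 < t := lt_min (by positivity) (by positivity)
  have ht1 : t ≤ δ / (2 * ‖d‖) := min_le_left _ _
  have ht2 : t ≤ 1 / (2 * C') := min_le_right _ _
  set y : EuclideanSpace ℝ (Fin n) := x₀ + t • d with hy
  have hsub : y - x₀ = t • d := by rw [hy]; abel
  have hnorm : ‖y - x₀‖ = t * ‖d‖ := by
    rw [hsub, norm_smul, Real.norm_eq_abs, abs_of_pos htpos]
  have hdist : dist y x₀ < δ := by
    rw [dist_eq_norm, hnorm]
    have : t * ‖d‖ ≤ δ / 2 := by
      calc t * ‖d‖ ≤ (δ / (2 * ‖d‖)) * ‖d‖ := mul_le_mul_of_nonneg_right ht1 hdn.le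
        _ = δ / 2 := by field_simp
    linarith
  have hineq := hδ' hdist
  rw [hsub, real_inner_smul_right, real_inner_self_eq_norm_sq] at hineq
  have hns : ‖t • d‖ = t * ‖d‖ := by
    rw [norm_smul, Real.norm_eq_abs, abs_of_pos htpos]
  rw [hns] at hineq
  -- t * ‖d‖ ^ 2 ≤ C * (t * ‖d‖) ^ 2
  have h1 : C * (t * ‖d‖) ^ 2 ≤ C' * (t * ‖d‖) ^ 2 :=
    mul_le_mul_of_nonneg_right (le_max_left _ _) (sq_nonneg _)
  have h2 : t * ‖d‖ ^ 2 ≤ C' * t ^ 2 * ‖d‖ ^ 2 := by nlinarith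
  have h3 : (1 : ℝ) ≤ C' * t := by
    have hpos : 0 < t * ‖d‖ ^ 2 := by positivity
    nlinarith
  have h4 : C' * t ≤ C' * (1 / (2 * C')) := mul_le_mul_of_nonneg_left ht2 hC'pos.le
  have h5 : C' * (1 / (2 * C')) = 1 / 2 := by field_simp
  linarith

/-- If `u, v` are `lam`-quasi-convex on the open convex set `U` and `w = u + v` has an
upper contact jet at `x₀ ∈ U`, then `u` and `v` are differentiable at `x₀` and every upper
contact jet of `w` at `x₀` has first-order part `Du(x₀) + Dv(x₀)`. -/
theorem stmt_8 {n : ℕ} (U : Set (EuclideanSpace ℝ (Fin n)))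
    (hU : IsOpen U) (hUc : Convex ℝ U)
    (u v : EuclideanSpace ℝ (Fin n) → ℝ) (lam : ℝ) (hlam : 0 ≤ lam)
    (hqcu : QCOn lam U u) (hqcv : QCOn lam U v)
    (x₀ : EuclideanSpace ℝ (Fin n)) (hx₀ : x₀ ∈ U)
    (p₀ : EuclideanSpace ℝ (Fin n)) (A₀ : Matrix (Fin n) (Fin n) ℝ) (hA₀ : A₀.IsSymm)
    (hjet : UpperContactJet (fun y => u y + v y) x₀ p₀ A₀) :
    ∃ gu gv : EuclideanSpace ℝ (Fin n),
      HasGradientAt u gu x₀ ∧ HasGradientAt v gv x₀ ∧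
      ∀ (p : EuclideanSpace ℝ (Fin n)) (A : Matrix (Fin n) (Fin n) ℝ),
        A.IsSymm → UpperContactJet (fun y => u y + v y) x₀ p A → p = gu + gv := by
  have hcu : ConvexOn ℝ U (fun x => u x + (lam / 2) * ‖x‖ ^ 2) := hqcu
  have hcv : ConvexOn ℝ U (fun x => v x + (lam / 2) * ‖x‖ ^ 2) := hqcv
  obtain ⟨q, hq⟩ := exists_subgradient hU hcu hx₀
  obtain ⟨r, hr⟩ := exists_subgradient hU hcv hx₀
  -- norm expansion
  have hns : ∀ y : EuclideanSpace ℝ (Fin n),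
      ‖y‖ ^ 2 = ‖x₀‖ ^ 2 + 2 * ⟪x₀, y - x₀⟫ + ‖y - x₀‖ ^ 2 := by
    intro y
    have e : x₀ + (y - x₀) = y := by abel
    calc ‖y‖ ^ 2 = ‖x₀ + (y - x₀)‖ ^ 2 := by rw [e]
      _ = ‖x₀‖ ^ 2 + 2 * ⟪x₀, y - x₀⟫ + ‖y - x₀‖ ^ 2 := norm_add_sq_real _ _
  -- every jet has the same first-order part
  have claim1 : ∀ (p : EuclideanSpace ℝ (Fin n)) (A : Matrix (Fin n) (Fin n) ℝ),
      UpperContactJet (fun y => u y + v y) x₀ p A →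
      p = q + r - (2 * lam) • x₀ := by
    intro p A hjetA
    obtain ⟨C, hC0, hCb⟩ := quad_bound A
    have hd : (q + r - p - (2 * lam) • x₀ : EuclideanSpace ℝ (Fin n)) = 0 := by
      apply eq_zero_of_inner_le (C := C / 2 + lam) (x₀ := x₀)
      filter_upwards [hjetA, hq, hr] with y h1 h2 h3
      have h1' : u y + v y ≤ u x₀ + v x₀ + ⟪p, y - x₀⟫ + (1 / 2) * quad A (y - x₀) := h1
      have h2' : u x₀ + (lam / 2) * ‖x₀‖ ^ 2 + ⟪q, y - x₀⟫ ≤ u y + (lam / 2) * ‖y‖ ^ 2 := h2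
      have h3' : v x₀ + (lam / 2) * ‖x₀‖ ^ 2 + ⟪r, y - x₀⟫ ≤ v y + (lam / 2) * ‖y‖ ^ 2 := h3
      have hqA := hCb (y - x₀)
      have hn' : (lam / 2) * ‖y‖ ^ 2
          = (lam / 2) * ‖x₀‖ ^ 2 + lam * ⟪x₀, y - x₀⟫ + (lam / 2) * ‖y - x₀‖ ^ 2 := by
        rw [hns y]; ring
      have hip : ⟪(q + r - p - (2 * lam) • x₀ : EuclideanSpace ℝ (Fin n)), y - x₀⟫
          = ⟪q, y - x₀⟫ + ⟪r, y - x₀⟫ - ⟪p, y - x₀⟫ - (2 * lam) * ⟪x₀, y - x₀⟫ := by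
        rw [inner_sub_left, inner_sub_left, inner_add_left, real_inner_smul_left]
      rw [hip]
      linarith
    have : (q + r - (2 * lam) • x₀) - p = 0 := by rw [← hd]; abel
    exact (sub_eq_zero.mp this).symm
  have hp₀ : p₀ = q + r - (2 * lam) • x₀ := claim1 p₀ A₀ hjet
  obtain ⟨C₀, hC₀0, hC₀b⟩ := quad_bound A₀
  -- gradient of u
  have hgu : HasGradientAt u (q - lam • x₀) x₀ := by
    apply hasGradientAt_of_squeeze (C := C₀ / 2 + lam)
    filter_upwards [hjet, hq, hr] with y h1 h2 h3
    have h1' : u y + v y ≤ u x₀ + v x₀ + ⟪p₀, y - x₀⟫ + (1 / 2) * quad A₀ (y - x₀) := h1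
    have h2' : u x₀ + (lam / 2) * ‖x₀‖ ^ 2 + ⟪q, y - x₀⟫ ≤ u y + (lam / 2) * ‖y‖ ^ 2 := h2
    have h3' : v x₀ + (lam / 2) * ‖x₀‖ ^ 2 + ⟪r, y - x₀⟫ ≤ v y + (lam / 2) * ‖y‖ ^ 2 := h3
    have hqA := hC₀b (y - x₀)
    have hn' : (lam / 2) * ‖y‖ ^ 2
        = (lam / 2) * ‖x₀‖ ^ 2 + lam * ⟪x₀, y - x₀⟫ + (lam / 2) * ‖y - x₀‖ ^ 2 := by
      rw [hns y]; ring
    have e1 : ⟪(q - lam • x₀ : EuclideanSpace ℝ (Fin n)), y - x₀⟫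
        = ⟪q, y - x₀⟫ - lam * ⟪x₀, y - x₀⟫ := by
      rw [inner_sub_left, real_inner_smul_left]
    have e2 : ⟪p₀, y - x₀⟫
        = ⟪q, y - x₀⟫ + ⟪r, y - x₀⟫ - (2 * lam) * ⟪x₀, y - x₀⟫ := by
      rw [hp₀, inner_sub_left, inner_add_left, real_inner_smul_left]
    have hN : (0:ℝ) ≤ ‖y - x₀‖ ^ 2 := sq_nonneg _
    have hlN : (0:ℝ) ≤ lam * ‖y - x₀‖ ^ 2 := mul_nonneg hlam hN
    have hCN : (0:ℝ) ≤ C₀ * ‖y - x₀‖ ^ 2 := mul_nonneg hC₀0 hN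
    rw [abs_le]
    constructor <;> [skip; skip] <;> rw [e1] <;> linarith
  -- gradient of v
  have hgv : HasGradientAt v (r - lam • x₀) x₀ := by
    apply hasGradientAt_of_squeeze (C := C₀ / 2 + lam)
    filter_upwards [hjet, hq, hr] with y h1 h2 h3
    have h1' : u y + v y ≤ u x₀ + v x₀ + ⟪p₀, y - x₀⟫ + (1 / 2) * quad A₀ (y - x₀) := h1
    have h2' : u x₀ + (lam / 2) * ‖x₀‖ ^ 2 + ⟪q, y - x₀⟫ ≤ u y + (lam / 2) * ‖y‖ ^ 2 := h2
    have h3' : v x₀ + (lam / 2) * ‖x₀‖ ^ 2 + ⟪r, y - x₀⟫ ≤ v y + (lam / 2) * ‖y‖ ^ 2 := h3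
    have hqA := hC₀b (y - x₀)
    have hn' : (lam / 2) * ‖y‖ ^ 2
        = (lam / 2) * ‖x₀‖ ^ 2 + lam * ⟪x₀, y - x₀⟫ + (lam / 2) * ‖y - x₀‖ ^ 2 := by
      rw [hns y]; ring
    have e1 : ⟪(r - lam • x₀ : EuclideanSpace ℝ (Fin n)), y - x₀⟫
        = ⟪r, y - x₀⟫ - lam * ⟪x₀, y - x₀⟫ := by
      rw [inner_sub_left, real_inner_smul_left]
    have e2 : ⟪p₀, y - x₀⟫
        = ⟪q, y - x₀⟫ + ⟪r, y - x₀⟫ - (2 * lam) * ⟪x₀, y - x₀⟫ := by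
      rw [hp₀, inner_sub_left, inner_add_left, real_inner_smul_left]
    have hN : (0:ℝ) ≤ ‖y - x₀‖ ^ 2 := sq_nonneg _
    have hlN : (0:ℝ) ≤ lam * ‖y - x₀‖ ^ 2 := mul_nonneg hlam hN
    have hCN : (0:ℝ) ≤ C₀ * ‖y - x₀‖ ^ 2 := mul_nonneg hC₀0 hN
    rw [abs_le]
    constructor <;> [skip; skip] <;> rw [e1] <;> linarith
  refine ⟨q - lam • x₀, r - lam • x₀, hgu, hgv, fun p A _ hjA => ?_⟩
  rw [claim1 p A hjA, two_mul, add_smul]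
  abel
end
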